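/- arXiv:2507.09332 — 6 statements merged into one kernel-verified Lean document; each statement's English description precedes it below -/
import Mathlib

section
/- Let f₊, f₋ : ℝ → ℝ be four times continuously differentiable, let ε₀ > 0, and let u₁ < u₀ < u₂. Define G₊(u,ε) = f₊'(u+ε) − f₋'(u−ε) − 2ε·f₊''(u+ε). Assume: (i) G₊(u₀,ε₀) = 0 and G₊(u,ε₀) > 0 for every u ∈ [u₁,u₂] with u ≠ u₀; (ii) f₊''(u₀+ε₀) − f₋''(u₀−ε₀) − 2ε₀·f₊'''(u₀+ε₀) = 0 (the first u-derivative of G₊ vanishes at (u₀,ε₀)); (iii) f₊'''(u₀+ε₀) − f₋'''(u₀−ε₀) − 2ε₀·f₊''''(u₀+ε₀) > 0 (the second u-derivative of G₊ is positive at (u₀,ε₀)); (iv) f₋''(u₀−ε₀) − f₊''(u₀+ε₀) − 2ε₀·f₊'''(u₀+ε₀) < 0 (the ε-derivative of G₊ is negative at (u₀,ε₀)). Then there exists ε₊ > ε₀ such that for every ε ∈ (ε₀, ε₊) there exist uˡ, uʳ with u₁ < uˡ < uʳ < u₂, G₊(uˡ,ε) = G₊(uʳ,ε) = 0, G₊(u,ε)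 < 0 for all u ∈ (uˡ,uʳ), and G₊(u,ε) > 0 for all u ∈ [u₁,uˡ) ∪ (uʳ,u₂]. -/
section Aux

lemma contDiff_deriv_of_succ {f : ℝ → ℝ} {n : ℕ} (h : ContDiff ℝ (n+1 : ℕ) f) :
    ContDiff ℝ (n : ℕ) (deriv f) := by
  have h' : ContDiff ℝ ((n : WithTop ℕ∞) + 1) f := by exact_mod_cast h
  rw [contDiff_succ_iff_deriv] at h'
  exact h'.2.2

lemma hasDerivAt_shift_add {f : ℝ → ℝ} (hf : Differentiable ℝ f) (c x : ℝ) :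
    HasDerivAt (fun u => f (u + c)) (deriv f (x + c)) x := by
  simpa [Function.comp_def] using ((hf (x + c)).hasDerivAt).comp x ((hasDerivAt_id x).add_const c)

lemma hasDerivAt_shift_sub {f : ℝ → ℝ} (hf : Differentiable ℝ f) (c x : ℝ) :
    HasDerivAt (fun u => f (u - c)) (deriv f (x - c)) x := by
  simpa [Function.comp_def] using ((hf (x - c)).hasDerivAt).comp x ((hasDerivAt_id x).sub_const c)

lemma hasDerivAt_cadd {f : ℝ → ℝ} (hf : Differentiable ℝ f) (c x : ℝ) :
    HasDerivAt (fun u => f (c + u)) (deriv f (c + x)) x := by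
  simpa [Function.comp_def] using ((hf (c + x)).hasDerivAt).comp x ((hasDerivAt_id x).const_add c)

lemma hasDerivAt_csub {f : ℝ → ℝ} (hf : Differentiable ℝ f) (c x : ℝ) :
    HasDerivAt (fun u => f (c - u)) (-deriv f (c - x)) x := by
  simpa [Function.comp_def] using ((hf (c - x)).hasDerivAt).comp x ((hasDerivAt_id x).const_sub c)

lemma convex_neg_mid {g : ℝ → ℝ} {a b x y z : ℝ} (h : StrictConvexOn ℝ (Set.Icc a b) g)
    (hx : x ∈ Set.Icc a b) (hz : z ∈ Set.Icc a b) (hxy : x < y) (hyz : y < z)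
    (hgx : g x ≤ 0) (hgz : g z ≤ 0) : g y < 0 := by
  have hxz : x < z := hxy.trans hyz
  have hzx : (0:ℝ) < z - x := by linarith
  set t := (z - y)/(z - x) with ht_def
  set s := (y - x)/(z - x) with hs_def
  have ht : 0 < t := div_pos (by linarith) hzx
  have hs : 0 < s := div_pos (by linarith) hzx
  have hts : t + s = 1 := by rw [ht_def, hs_def]; field_simp; ring
  have hy : t • x + s • z = y := by
    simp only [smul_eq_mul, ht_def, hs_def]; field_simp; ring
  have h2 := h.2 hx hz (ne_of_lt hxz) ht hs hts
  rw [hy] at h2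
  simp only [smul_eq_mul] at h2
  nlinarith

lemma main_aux (G G₁ G₂ E : ℝ → ℝ → ℝ) (u₀ u₁ u₂ ε₀ : ℝ)
    (hG : Continuous fun p : ℝ × ℝ => G p.1 p.2)
    (hG₂ : Continuous fun p : ℝ × ℝ => G₂ p.1 p.2)
    (hE : Continuous fun p : ℝ × ℝ => E p.1 p.2)
    (hd1 : ∀ ε u, HasDerivAt (fun u => G u ε) (G₁ u ε) u)
    (hd2 : ∀ ε u, HasDerivAt (fun u => G₁ u ε) (G₂ u ε) u)
    (hdE : ∀ ε, HasDerivAt (fun ε => G u₀ ε) (E u₀ ε) ε)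
    (hu₁ : u₁ < u₀) (hu₂ : u₀ < u₂)
    (hroot : G u₀ ε₀ = 0)
    (hpos : ∀ u ∈ Set.Icc u₁ u₂, u ≠ u₀ → 0 < G u ε₀)
    (hG₂pos : 0 < G₂ u₀ ε₀) (hEneg : E u₀ ε₀ < 0) :
    ∃ εp : ℝ, ε₀ < εp ∧ ∀ ε ∈ Set.Ioo ε₀ εp, ∃ ul ur : ℝ,
      u₁ < ul ∧ ul < ur ∧ ur < u₂ ∧
      G ul ε = 0 ∧ G ur ε = 0 ∧
      (∀ u ∈ Set.Ioo ul ur, G u ε < 0) ∧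
      (∀ u ∈ Set.Ico u₁ ul ∪ Set.Ioc ur u₂, 0 < G u ε) := by
  have hSopen : IsOpen {p : ℝ × ℝ | 0 < G₂ p.1 p.2 ∧ E p.1 p.2 < 0} :=
    (isOpen_lt continuous_const hG₂).inter (isOpen_lt hE continuous_const)
  have hSmem : ((u₀, ε₀) : ℝ × ℝ) ∈ {p : ℝ × ℝ | 0 < G₂ p.1 p.2 ∧ E p.1 p.2 < 0} :=
    ⟨hG₂pos, hEneg⟩
  obtain ⟨r, hr, hball⟩ := Metric.isOpen_iff.1 hSopen _ hSmem
  set δ : ℝ := min (min ((u₀ - u₁)/2) ((u₂ - u₀)/2)) (r/2) with hδ_def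
  have hδpos : 0 < δ := lt_min (lt_min (by linarith) (by linarith)) (by linarith)
  have hδu₁ : u₁ < u₀ - δ := by
    have : δ ≤ (u₀ - u₁)/2 := (min_le_left _ _).trans (min_le_left _ _)
    linarith
  have hδu₂ : u₀ + δ < u₂ := by
    have : δ ≤ (u₂ - u₀)/2 := (min_le_left _ _).trans (min_le_right _ _)
    linarith
  have hrect : ∀ u ε, |u - u₀| ≤ δ → |ε - ε₀| ≤ δ → 0 < G₂ u ε ∧ E u ε < 0 := by
    intro u ε h1 h2
    have hδr : δ ≤ r/2 := min_le_right _ _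
    have : ((u, ε) : ℝ × ℝ) ∈ Metric.ball ((u₀, ε₀) : ℝ × ℝ) r := by
      rw [Metric.mem_ball, Prod.dist_eq]
      simp only [Real.dist_eq]
      exact lt_of_le_of_lt (max_le (h1.trans hδr) (h2.trans hδr)) (by linarith)
    exact hball this
  set K : Set ℝ := Set.Icc u₁ u₂ \ Set.Ioo (u₀ - δ) (u₀ + δ) with hK_def
  have hKcpt : IsCompact K := isCompact_Icc.diff isOpen_Ioo
  have hKsub : K ×ˢ ({ε₀} : Set ℝ) ⊆ {p : ℝ × ℝ | 0 < G p.1 p.2} := by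
    rintro ⟨u, ε⟩ ⟨⟨huIcc, huIoo⟩, hε⟩
    have hune : u ≠ u₀ := by
      intro h; exact huIoo ⟨by rw [h]; linarith, by rw [h]; linarith⟩
    simp only [Set.mem_singleton_iff] at hε
    simpa [hε] using hpos u huIcc hune
  obtain ⟨V, W, hVo, hWo, hKV, hεW, hVW⟩ :=
    generalized_tube_lemma hKcpt isCompact_singleton
      (isOpen_lt continuous_const hG) hKsub
  obtain ⟨η, hη, hηW⟩ := Metric.isOpen_iff.1 hWo ε₀ (hεW rfl)
  have hmin : 0 < min η δ := lt_min hη hδpos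
  refine ⟨ε₀ + min η δ, by linarith, ?_⟩
  rintro ε ⟨hε1, hε2⟩
  have hεη : ε - ε₀ < η := by have := min_le_left η δ; linarith
  have hεδ : ε - ε₀ ≤ δ := by have := min_le_right η δ; linarith
  have hεδ' : |ε - ε₀| ≤ δ := by rw [abs_of_pos (by linarith)]; exact hεδ
  have hεball : ε ∈ Metric.ball ε₀ η := by
    rw [Metric.mem_ball, Real.dist_eq, abs_of_pos (by linarith)]; linarith
  have hKpos : ∀ u ∈ K, 0 < G u ε := by
    intro u hu
    exact hVW (show ((u, ε) : ℝ × ℝ) ∈ V ×ˢ W from ⟨hKV hu, hηW hεball⟩)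
  have hGcu : ∀ v : ℝ, Continuous fun u => G u v := fun v =>
    hG.comp (continuous_id.prodMk continuous_const)
  have hGceps : Continuous fun e => G u₀ e := hG.comp (continuous_const.prodMk continuous_id)
  have hanti : StrictAntiOn (fun e => G u₀ e) (Set.Icc ε₀ (ε₀ + δ)) := by
    apply strictAntiOn_of_deriv_neg (convex_Icc _ _) hGceps.continuousOn
    intro x hx
    rw [interior_Icc, Set.mem_Ioo] at hx
    rw [(hdE x).deriv]
    exact (hrect u₀ x (by simpa using hδpos.le)
      (by rw [abs_of_pos (by linarith)]; linarith)).2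
  have hu₀neg : G u₀ ε < 0 := by
    have := hanti (Set.mem_Icc.2 ⟨le_refl _, by linarith⟩)
      (Set.mem_Icc.2 ⟨hε1.le, by linarith⟩) hε1
    simpa [hroot] using this
  have hD1 : deriv (fun u => G u ε) = fun u => G₁ u ε := funext fun u => (hd1 ε u).deriv
  have hD2 : deriv (fun u => G₁ u ε) = fun u => G₂ u ε := funext fun u => (hd2 ε u).deriv
  have hconv : StrictConvexOn ℝ (Set.Icc (u₀-δ) (u₀+δ)) (fun u => G u ε) := by
    apply strictConvexOn_of_deriv2_pos (convex_Icc _ _) (hGcu ε).continuousOn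
    intro x hx
    rw [interior_Icc, Set.mem_Ioo] at hx
    have hiter : deriv^[2] (fun u => G u ε) = fun u => G₂ u ε := by
      simp only [Function.iterate_succ, Function.iterate_zero, Function.comp, id]
      rw [hD1, hD2]
    rw [hiter]
    exact (hrect x ε (abs_le.2 ⟨by linarith, by linarith⟩) hεδ').1
  have hGl : 0 < G (u₀ - δ) ε :=
    hKpos _ ⟨⟨by linarith, by linarith⟩, fun h => lt_irrefl _ h.1⟩
  have hGr : 0 < G (u₀ + δ) ε :=
    hKpos _ ⟨⟨by linarith, by linarith⟩, fun h => lt_irrefl _ h.2⟩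
  obtain ⟨ul, hulmem, hul0⟩ :=
    intermediate_value_Ioo' (by linarith : u₀ - δ ≤ u₀) (hGcu ε).continuousOn
      (⟨hu₀neg, hGl⟩ : (0:ℝ) ∈ Set.Ioo (G u₀ ε) (G (u₀ - δ) ε))
  obtain ⟨ur, hurmem, hur0⟩ :=
    intermediate_value_Ioo (by linarith : u₀ ≤ u₀ + δ) (hGcu ε).continuousOn
      (⟨hu₀neg, hGr⟩ : (0:ℝ) ∈ Set.Ioo (G u₀ ε) (G (u₀ + δ) ε))
  have hulIcc : ul ∈ Set.Icc (u₀-δ) (u₀+δ) := ⟨hulmem.1.le, by linarith [hulmem.2]⟩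
  have hurIcc : ur ∈ Set.Icc (u₀-δ) (u₀+δ) := ⟨by linarith [hurmem.1], hurmem.2.le⟩
  refine ⟨ul, ur, by linarith [hulmem.1], by linarith [hulmem.2, hurmem.1],
    by linarith [hurmem.2], hul0, hur0, ?_, ?_⟩
  · intro u hu
    exact convex_neg_mid (g := fun u => G u ε) hconv hulIcc hurIcc hu.1 hu.2 hul0.le hur0.le
  · intro u hu
    by_contra hcon
    push_neg at hcon
    rcases hu with h | h
    · rcases le_or_gt u (u₀ - δ) with hle | hgt
      · have hmemK : u ∈ K := ⟨⟨h.1, by linarith [hulmem.2]⟩,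
          fun hm => absurd hm.1 (not_lt.2 hle)⟩
        exact absurd (hKpos u hmemK) (not_lt.2 hcon)
      · have huIcc : u ∈ Set.Icc (u₀-δ) (u₀+δ) :=
          ⟨hgt.le, by linarith [h.2, hulmem.2]⟩
        have := convex_neg_mid (g := fun u => G u ε) hconv huIcc hurIcc h.2
          (lt_trans hulmem.2 hurmem.1) hcon hur0.le
        simp only [hul0] at this
        exact lt_irrefl _ this
    · rcases le_or_gt (u₀ + δ) u with hle | hgt
      · have hmemK : u ∈ K := ⟨⟨by linarith [hurmem.1], h.2⟩,
          fun hm => absurd hm.2 (not_lt.2 hle)⟩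
        exact absurd (hKpos u hmemK) (not_lt.2 hcon)
      · have huIcc : u ∈ Set.Icc (u₀-δ) (u₀+δ) :=
          ⟨by linarith [h.1, hurmem.1], hgt.le⟩
        have := convex_neg_mid (g := fun u => G u ε) hconv hulIcc huIcc
          (lt_trans hulmem.2 hurmem.1) h.1 hul0.le hcon
        simp only [hur0] at this
        exact lt_irrefl _ this

end Aux

/-- `G₊(u,ε) = f₊'(u+ε) − f₋'(u−ε) − 2ε·f₊''(u+ε)`, i.e. `2εD₊(u,ε)` in the
paper's notation. -/
noncomputable def Gplus (fp fm : ℝ → ℝ) (u ε : ℝ) : ℝ :=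
  deriv fp (u + ε) - deriv fm (u - ε) - 2 * ε * deriv (deriv fp) (u + ε)

/-- Birth of a minor pocket: if `ε₀` is a simple root of
`ε ↦ D₊(u₀,ε)` and `u₀` is a second-order root of `u ↦ D₊(u,ε₀)`, then for
every `ε` slightly bigger than `ε₀` the equation `G₊(u,ε) = 0` has exactly two
roots `uˡ < uʳ` in `(u₁,u₂)`, with `G₊ < 0` between them and `G₊ > 0` outside. -/
theorem stmt_2 (fp fm : ℝ → ℝ)
    (hfp : ContDiff ℝ 4 fp) (hfm : ContDiff ℝ 4 fm)
    (ε₀ u₀ u₁ u₂ : ℝ) (hε₀ : 0 < ε₀) (hu₁ : u₁ < u₀) (hu₂ : u₀ < u₂)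
    (hroot : Gplus fp fm u₀ ε₀ = 0)
    (hpos : ∀ u ∈ Set.Icc u₁ u₂, u ≠ u₀ → 0 < Gplus fp fm u ε₀)
    (hu' : deriv (deriv fp) (u₀ + ε₀) - deriv (deriv fm) (u₀ - ε₀) -
      2 * ε₀ * deriv (deriv (deriv fp)) (u₀ + ε₀) = 0)
    (hu'' : 0 < deriv (deriv (deriv fp)) (u₀ + ε₀) -
      deriv (deriv (deriv fm)) (u₀ - ε₀) -
      2 * ε₀ * deriv (deriv (deriv (deriv fp))) (u₀ + ε₀))
    (hε' : deriv (deriv fm) (u₀ - ε₀) - deriv (deriv fp) (u₀ + ε₀) -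
      2 * ε₀ * deriv (deriv (deriv fp)) (u₀ + ε₀) < 0) :
    ∃ εp : ℝ, ε₀ < εp ∧ ∀ ε ∈ Set.Ioo ε₀ εp, ∃ ul ur : ℝ,
      u₁ < ul ∧ ul < ur ∧ ur < u₂ ∧
      Gplus fp fm ul ε = 0 ∧ Gplus fp fm ur ε = 0 ∧
      (∀ u ∈ Set.Ioo ul ur, Gplus fp fm u ε < 0) ∧
      (∀ u ∈ Set.Ico u₁ ul ∪ Set.Ioc ur u₂, 0 < Gplus fp fm u ε) := by
  have hfp4 : ContDiff ℝ (4:ℕ) fp := by exact_mod_cast hfp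
  have hfm4 : ContDiff ℝ (4:ℕ) fm := by exact_mod_cast hfm
  have hp3 : ContDiff ℝ (3:ℕ) (deriv fp) := contDiff_deriv_of_succ hfp4
  have hp2 : ContDiff ℝ (2:ℕ) (deriv (deriv fp)) := contDiff_deriv_of_succ hp3
  have hp1 : ContDiff ℝ (1:ℕ) (deriv (deriv (deriv fp))) := contDiff_deriv_of_succ hp2
  have hp0 : ContDiff ℝ (0:ℕ) (deriv (deriv (deriv (deriv fp)))) := contDiff_deriv_of_succ hp1
  have hm3 : ContDiff ℝ (3:ℕ) (deriv fm) := contDiff_deriv_of_succ hfm4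
  have hm2 : ContDiff ℝ (2:ℕ) (deriv (deriv fm)) := contDiff_deriv_of_succ hm3
  have hm1 : ContDiff ℝ (1:ℕ) (deriv (deriv (deriv fm))) := contDiff_deriv_of_succ hm2
  have dp1 : Differentiable ℝ (deriv fp) := hp3.differentiable (by norm_num)
  have dp2 : Differentiable ℝ (deriv (deriv fp)) := hp2.differentiable (by norm_num)
  have dp3 : Differentiable ℝ (deriv (deriv (deriv fp))) := hp1.differentiable (by norm_num)
  have dm1 : Differentiable ℝ (deriv fm) := hm3.differentiable (by norm_num)
  have dm2 : Differentiable ℝ (deriv (deriv fm)) := hm2.differentiable (by norm_num)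
  have cp1 : Continuous (deriv fp) := hp3.continuous
  have cp2 : Continuous (deriv (deriv fp)) := hp2.continuous
  have cp3 : Continuous (deriv (deriv (deriv fp))) := hp1.continuous
  have cp4 : Continuous (deriv (deriv (deriv (deriv fp)))) := hp0.continuous
  have cm1 : Continuous (deriv fm) := hm3.continuous
  have cm2 : Continuous (deriv (deriv fm)) := hm2.continuous
  have cm3 : Continuous (deriv (deriv (deriv fm))) := hm1.continuous
  have hadd : Continuous (fun p : ℝ × ℝ => p.1 + p.2) := continuous_fst.add continuous_snd
  have hsub : Continuous (fun p : ℝ × ℝ => p.1 - p.2) := continuous_fst.sub continuous_snd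
  refine main_aux (fun u ε => Gplus fp fm u ε)
    (fun u ε => deriv (deriv fp) (u+ε) - deriv (deriv fm) (u-ε)
      - 2*ε*deriv (deriv (deriv fp)) (u+ε))
    (fun u ε => deriv (deriv (deriv fp)) (u+ε) - deriv (deriv (deriv fm)) (u-ε)
      - 2*ε*deriv (deriv (deriv (deriv fp))) (u+ε))
    (fun u ε => deriv (deriv fm) (u-ε) - deriv (deriv fp) (u+ε)
      - 2*ε*deriv (deriv (deriv fp)) (u+ε))
    u₀ u₁ u₂ ε₀ ?_ ?_ ?_ ?_ ?_ ?_ hu₁ hu₂ hroot hpos hu'' hε'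
  · simp only [Gplus]
    exact ((cp1.comp hadd).sub (cm1.comp hsub)).sub
      ((continuous_const.mul continuous_snd).mul (cp2.comp hadd))
  · exact ((cp3.comp hadd).sub (cm3.comp hsub)).sub
      ((continuous_const.mul continuous_snd).mul (cp4.comp hadd))
  · exact ((cm2.comp hsub).sub (cp2.comp hadd)).sub
      ((continuous_const.mul continuous_snd).mul (cp3.comp hadd))
  · intro ε u
    have A := hasDerivAt_shift_add dp1 ε u
    have B := hasDerivAt_shift_sub dm1 ε u
    have C := (hasDerivAt_shift_add dp2 ε u).const_mul (2*ε)
    exact (A.sub B).sub C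
  · intro ε u
    have A := hasDerivAt_shift_add dp2 ε u
    have B := hasDerivAt_shift_sub dm2 ε u
    have C := (hasDerivAt_shift_add dp3 ε u).const_mul (2*ε)
    exact (A.sub B).sub C
  · intro ε
    have A := hasDerivAt_cadd dp1 u₀ ε
    have B := hasDerivAt_csub dm1 u₀ ε
    have Cmul : HasDerivAt (fun ε : ℝ => 2*ε) 2 ε := by
      simpa using (hasDerivAt_id ε).const_mul 2
    have C := Cmul.mul (hasDerivAt_cadd dp2 u₀ ε)
    have h := (A.sub B).sub C
    have e : deriv (deriv fm) (u₀ - ε) - deriv (deriv fp) (u₀ + ε)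
        - 2*ε*deriv (deriv (deriv fp)) (u₀ + ε)
        = deriv (deriv fp) (u₀ + ε) - -deriv (deriv fm) (u₀ - ε)
          - (2 * deriv (deriv fp) (u₀ + ε) + 2*ε * deriv (deriv (deriv fp)) (u₀ + ε)) := by
      ring
    show HasDerivAt (fun e => Gplus fp fm u₀ e)
      (deriv (deriv fm) (u₀ - ε) - deriv (deriv fp) (u₀ + ε)
        - 2*ε*deriv (deriv (deriv fp)) (u₀ + ε)) ε
    rw [e]
    exact h
end

section
/- Let f₊(t) = a₃⁺t³ + a₂⁺t² + a₁⁺t + a₀⁺ and f₋(t) = a₃⁻t³ + a₂⁻t² + a₁⁻t + a₀⁻ with a₃⁺ > 0, a₃⁺ > a₃⁻, and 3(a₃⁺ − a₃⁻)(a₁⁺ − a₁⁻) > (a₂⁺ − a₂⁻)². Set ε₀⁺ = √( (1/(12a₃⁺))·[a₁⁺ − a₁⁻ − (a₂⁺ − a₂⁻)²/(3(a₃⁺ − a₃⁻))] ) and u₀⁺ = ε₀⁺ − (a₂⁺ − a₂⁻)/(3(a₃⁺ − a₃⁻)). Then for all real u and all ε with 0 < ε < ε₀⁺, one has f₊'(u+ε)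 − f₋'(u−ε) − 2ε·f₊''(u+ε) > 0; and for ε = ε₀⁺ one has f₊'(u+ε₀⁺) − f₋'(u−ε₀⁺) − 2ε₀⁺·f₊''(u+ε₀⁺) ≥ 0 with equality if and only if u = u₀⁺. -/
lemma deriv_cubic' (a b c d : ℝ) :
    deriv (fun t : ℝ => a * t ^ 3 + b * t ^ 2 + c * t + d)
      = fun t => 3 * a * t ^ 2 + 2 * b * t + c := by
  funext x
  have h : HasDerivAt (fun t : ℝ => a * t ^ 3 + b * t ^ 2 + c * t + d)
      (3 * a * x ^ 2 + 2 * b * x + c) x := by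
    have := (((hasDerivAt_pow 3 x).const_mul a).add
      ((hasDerivAt_pow 2 x).const_mul b)).add
      (((hasDerivAt_id x).const_mul c).add (hasDerivAt_const x d))
    simp only [id] at this
    convert this using 1
    · rfl
    · rfl
    · ext t; simp only [Pi.add_apply]; ring
    · push_cast; ring
  exact h.deriv

lemma deriv_quad' (a b c : ℝ) :
    deriv (fun t : ℝ => a * t ^ 2 + b * t + c)
      = fun t => 2 * a * t + b := by
  funext x
  have h : HasDerivAt (fun t : ℝ => a * t ^ 2 + b * t + c)
      (2 * a * x + b) x := by
    have := ((hasDerivAt_pow 2 x).const_mul a).add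
      (((hasDerivAt_id x).const_mul b).add (hasDerivAt_const x c))
    simp only [id] at this
    convert this using 1
    · rfl
    · rfl
    · ext t; simp only [Pi.add_apply]; ring
    · push_cast; ring
  exact h.deriv

/-- in the cubic example with negative discriminant, the
quantity `2εD₊(u,ε) = f₊'(u+ε) − f₋'(u−ε) − 2ε·f₊''(u+ε)` is strictly
positive for all `u` when `0 < ε < ε₀⁺`, and for `ε = ε₀⁺` it is nonnegative,
vanishing exactly at `u = u₀⁺`. -/
theorem stmt_8 (a3p a2p a1p a0p a3m a2m a1m a0m : ℝ)
    (fp fm : ℝ → ℝ)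
    (hfp : fp = fun t => a3p * t ^ 3 + a2p * t ^ 2 + a1p * t + a0p)
    (hfm : fm = fun t => a3m * t ^ 3 + a2m * t ^ 2 + a1m * t + a0m)
    (ha3p : 0 < a3p) (ha : a3m < a3p)
    (hdisc : (a2p - a2m) ^ 2 < 3 * (a3p - a3m) * (a1p - a1m))
    (ε₀p u₀p : ℝ)
    (hε₀p : ε₀p = Real.sqrt ((1 / (12 * a3p)) *
      (a1p - a1m - (a2p - a2m) ^ 2 / (3 * (a3p - a3m)))))
    (hu₀p : u₀p = ε₀p - (a2p - a2m) / (3 * (a3p - a3m))) :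
    (∀ u ε : ℝ, 0 < ε → ε < ε₀p →
      0 < deriv fp (u + ε) - deriv fm (u - ε) -
        2 * ε * deriv (deriv fp) (u + ε)) ∧
    (∀ u : ℝ,
      0 ≤ deriv fp (u + ε₀p) - deriv fm (u - ε₀p) -
        2 * ε₀p * deriv (deriv fp) (u + ε₀p) ∧
      (deriv fp (u + ε₀p) - deriv fm (u - ε₀p) -
        2 * ε₀p * deriv (deriv fp) (u + ε₀p) = 0 ↔ u = u₀p)) := by
  subst hfp hfm
  rw [deriv_cubic' a3p a2p a1p a0p, deriv_cubic' a3m a2m a1m a0m,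
    deriv_quad' (3 * a3p) (2 * a2p) a1p]
  set A : ℝ := a3p - a3m with hA
  have hApos : 0 < A := by linarith
  have hAne : (3 : ℝ) * A ≠ 0 := by positivity
  have harg : 0 ≤ (1 / (12 * a3p)) *
      (a1p - a1m - (a2p - a2m) ^ 2 / (3 * (a3p - a3m))) := by
    have h1 : 0 < a1p - a1m - (a2p - a2m) ^ 2 / (3 * A) := by
      rw [sub_pos, div_lt_iff₀ (by positivity)]
      nlinarith
    positivity
  have hε2 : ε₀p ^ 2 = (1 / (12 * a3p)) *
      (a1p - a1m - (a2p - a2m) ^ 2 / (3 * (a3p - a3m))) := by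
    rw [hε₀p, Real.sq_sqrt harg]
  have hkey : ∀ u ε : ℝ,
      (3 * a3p * (u + ε) ^ 2 + 2 * a2p * (u + ε) + a1p) -
        (3 * a3m * (u - ε) ^ 2 + 2 * a2m * (u - ε) + a1m) -
        2 * ε * (2 * (3 * a3p) * (u + ε) + 2 * a2p)
      = 3 * A * (u - ε + (a2p - a2m) / (3 * A)) ^ 2
        - 12 * a3p * ε ^ 2 + 12 * a3p * ε₀p ^ 2 := by
    intro u ε
    have hA0 : a3p - a3m ≠ 0 := (sub_pos.mpr ha).ne'
    rw [hε2, hA]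
    field_simp
    ring
  constructor
  · intro u ε hε hεlt
    rw [hkey u ε]
    have hsq : 0 ≤ A * (u - ε + (a2p - a2m) / (3 * A)) ^ 2 :=
      mul_nonneg hApos.le (sq_nonneg _)
    have h2 : 0 < ε₀p ^ 2 - ε ^ 2 := by nlinarith
    nlinarith
  · intro u
    rw [hkey u ε₀p]
    have huu : u - ε₀p + (a2p - a2m) / (3 * A) = u - u₀p := by
      rw [hu₀p]; ring
    rw [huu]
    constructor
    · nlinarith [sq_nonneg (u - u₀p)]
    · constructor
      · intro h
        have : (u - u₀p) ^ 2 = 0 := by nlinarith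
        have := pow_eq_zero_iff (n := 2) (by norm_num) |>.mp this
        linarith
      · intro h; subst h; ring
end

section
/- Let a₃⁺ > 0, a₃⁺ > a₃⁻, 81(a₃⁺ − a₃⁻) > a₃⁺ (so that 80a₃⁺ − 81a₃⁻ > 0), and let ε₀⁺ > 0. Set ε₁⁺ = 9ε₀⁺·√( (a₃⁺ − a₃⁻)/(80a₃⁺ − 81a₃⁻) ). Then for every ε > ε₀⁺: 1 − √( a₃⁺ε² / ((a₃⁺ − a₃⁻)(ε² − (ε₀⁺)²)) ) < −8 if and only if ε < ε₁⁺. -/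
/-- if `a₃⁺ > 0`, `a₃⁺ > a₃⁻` and `81(a₃⁺ − a₃⁻) > a₃⁺`, then
for `ε > ε₀⁺` the parameter `s = 1 − √(a₃⁺ε²/((a₃⁺−a₃⁻)(ε²−(ε₀⁺)²)))`
satisfies `s < −8` exactly when `ε < ε₁⁺ = 9ε₀⁺√((a₃⁺−a₃⁻)/(80a₃⁺−81a₃⁻))`. -/
theorem stmt_12 (a3p a3m ε₀p ε₁p : ℝ)
    (ha3p : 0 < a3p) (ha : a3m < a3p) (h81 : a3p < 81 * (a3p - a3m))
    (hε₀p : 0 < ε₀p)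
    (hε₁p : ε₁p = 9 * ε₀p * Real.sqrt ((a3p - a3m) / (80 * a3p - 81 * a3m))) :
    ∀ ε : ℝ, ε₀p < ε →
      (1 - Real.sqrt (a3p * ε ^ 2 / ((a3p - a3m) * (ε ^ 2 - ε₀p ^ 2))) < -8 ↔
        ε < ε₁p) := by
  intro ε hε
  have hD : 0 < 80 * a3p - 81 * a3m := by linarith
  have hA : 0 < a3p - a3m := by linarith
  have hε0 : 0 < ε := lt_trans hε₀p hε
  have hden : 0 < (a3p - a3m) * (ε ^ 2 - ε₀p ^ 2) := by
    apply mul_pos hA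
    nlinarith
  have hε₁pos : 0 < ε₁p := by
    rw [hε₁p]
    positivity
  have hε₁sq : ε₁p ^ 2 = 81 * ε₀p ^ 2 * ((a3p - a3m) / (80 * a3p - 81 * a3m)) := by
    rw [hε₁p, mul_pow, mul_pow, Real.sq_sqrt (le_of_lt (div_pos hA hD))]
    ring
  have h1 : 1 - Real.sqrt (a3p * ε ^ 2 / ((a3p - a3m) * (ε ^ 2 - ε₀p ^ 2))) < -8 ↔
      9 < Real.sqrt (a3p * ε ^ 2 / ((a3p - a3m) * (ε ^ 2 - ε₀p ^ 2))) := by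
    constructor <;> intro h <;> linarith
  rw [h1, Real.lt_sqrt (by norm_num : (0:ℝ) ≤ 9), lt_div_iff₀ hden]
  have h2 : (9:ℝ) ^ 2 * ((a3p - a3m) * (ε ^ 2 - ε₀p ^ 2)) < a3p * ε ^ 2 ↔
      ε ^ 2 < ε₁p ^ 2 := by
    rw [hε₁sq, ← mul_div_assoc, lt_div_iff₀ hD]
    constructor <;> intro h <;> nlinarith
  rw [h2]
  constructor
  · intro h
    exact lt_of_pow_lt_pow_left₀ 2 (le_of_lt hε₁pos) h
  · intro h
    exact pow_lt_pow_left₀ h (le_of_lt hε0) two_ne_zero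
end

section
/- Let f₊(t) = a₃⁺t³ + a₂⁺t² + a₁⁺t + a₀⁺ and f₋(t) = a₃⁻t³ + a₂⁻t² + a₁⁻t + a₀⁻ with a₃⁺ > 0 > a₃⁻ and 3(a₃⁺ − a₃⁻)(a₁⁺ − a₁⁻) > (a₂⁺ − a₂⁻)². Set ε₀⁺ = √( (1/(12a₃⁺))·[a₁⁺ − a₁⁻ − (a₂⁺ − a₂⁻)²/(3(a₃⁺ − a₃⁻))] ), ε₀⁻ = √(a₃⁺/(−a₃⁻))·ε₀⁺, and u₀⁻ = −ε₀⁻ − (a₂⁺ − a₂⁻)/(3(a₃⁺ − a₃⁻)). Then ε₀⁻ = √( (1/(12(−a₃⁻)))·[a₁⁺ − a₁⁻ − (a₂⁺ − a₂⁻)²/(3(a₃⁺ − a₃⁻))] ) and f₊'(u₀⁻ + ε₀⁻) − f₋'(u₀⁻ − ε₀⁻) − 2ε₀⁻·f₋''(u₀⁻ − ε₀⁻) = 0. -/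
/-- in the cubic example with `a₃⁺ > 0 > a₃⁻`, the critical
value `ε₀⁻ = √(a₃⁺/(−a₃⁻))·ε₀⁺` equals
`√((1/(12(−a₃⁻)))·[a₁⁺ − a₁⁻ − (a₂⁺ − a₂⁻)²/(3(a₃⁺ − a₃⁻))])`, and
`D₋` vanishes at `(u₀⁻, ε₀⁻)`, i.e.
`f₊'(u₀⁻+ε₀⁻) − f₋'(u₀⁻−ε₀⁻) − 2ε₀⁻·f₋''(u₀⁻−ε₀⁻) = 0`. -/
theorem stmt_13 (a3p a2p a1p a0p a3m a2m a1m a0m : ℝ)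
    (fp fm : ℝ → ℝ)
    (hfp : fp = fun t => a3p * t ^ 3 + a2p * t ^ 2 + a1p * t + a0p)
    (hfm : fm = fun t => a3m * t ^ 3 + a2m * t ^ 2 + a1m * t + a0m)
    (ha3p : 0 < a3p) (ha3m : a3m < 0)
    (hdisc : (a2p - a2m) ^ 2 < 3 * (a3p - a3m) * (a1p - a1m))
    (ε₀p ε₀m u₀m : ℝ)
    (hε₀p : ε₀p = Real.sqrt ((1 / (12 * a3p)) *
      (a1p - a1m - (a2p - a2m) ^ 2 / (3 * (a3p - a3m)))))
    (hε₀m : ε₀m = Real.sqrt (a3p / (-a3m)) * ε₀p)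
    (hu₀m : u₀m = -ε₀m - (a2p - a2m) / (3 * (a3p - a3m))) :
    ε₀m = Real.sqrt ((1 / (12 * (-a3m))) *
      (a1p - a1m - (a2p - a2m) ^ 2 / (3 * (a3p - a3m)))) ∧
    deriv fp (u₀m + ε₀m) - deriv fm (u₀m - ε₀m) -
      2 * ε₀m * deriv (deriv fm) (u₀m - ε₀m) = 0 := by
  have hdm : (0:ℝ) < a3p - a3m := by linarith
  have hnm : (0:ℝ) < -a3m := by linarith
  have hX : 0 ≤ a1p - a1m - (a2p - a2m) ^ 2 / (3 * (a3p - a3m)) := by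
    rw [sub_nonneg, div_le_iff₀ (by positivity)]
    nlinarith
  have hEm : ε₀m = Real.sqrt ((1 / (12 * (-a3m))) *
      (a1p - a1m - (a2p - a2m) ^ 2 / (3 * (a3p - a3m)))) := by
    rw [hε₀m, hε₀p, ← Real.sqrt_mul (div_nonneg ha3p.le hnm.le)]
    congr 1
    field_simp [ha3p.ne', ha3m.ne, hdm.ne']
  refine ⟨hEm, ?_⟩
  have hE2 : ε₀m ^ 2 = (1 / (12 * (-a3m))) *
      (a1p - a1m - (a2p - a2m) ^ 2 / (3 * (a3p - a3m))) := by
    rw [hEm, Real.sq_sqrt (mul_nonneg (le_of_lt (div_pos one_pos (by linarith))) hX)]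
  have hdfp : ∀ t : ℝ, deriv fp t = 3 * a3p * t ^ 2 + 2 * a2p * t + a1p := by
    intro t
    rw [hfp]
    have h : HasDerivAt (fun t : ℝ => a3p * t ^ 3 + a2p * t ^ 2 + a1p * t + a0p)
        (3 * a3p * t ^ 2 + 2 * a2p * t + a1p) t := by
      have := (((hasDerivAt_pow 3 t).const_mul a3p).add
        ((hasDerivAt_pow 2 t).const_mul a2p)).add
        (((hasDerivAt_id t).const_mul a1p).add (hasDerivAt_const t a0p))
      convert this using 1
      · rfl
      · rfl
      · ext s; simp only [id_eq, Pi.add_apply]; ring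
      · push_cast; ring
    exact h.deriv
  have hdfm : deriv fm = fun t => 3 * a3m * t ^ 2 + 2 * a2m * t + a1m := by
    funext t
    rw [hfm]
    have h : HasDerivAt (fun t : ℝ => a3m * t ^ 3 + a2m * t ^ 2 + a1m * t + a0m)
        (3 * a3m * t ^ 2 + 2 * a2m * t + a1m) t := by
      have := (((hasDerivAt_pow 3 t).const_mul a3m).add
        ((hasDerivAt_pow 2 t).const_mul a2m)).add
        (((hasDerivAt_id t).const_mul a1m).add (hasDerivAt_const t a0m))
      convert this using 1
      · rfl
      · rfl
      · ext s; simp only [id_eq, Pi.add_apply]; ring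
      · push_cast; ring
    exact h.deriv
  have hddfm : ∀ t : ℝ, deriv (deriv fm) t = 6 * a3m * t + 2 * a2m := by
    intro t
    rw [hdfm]
    have h : HasDerivAt (fun t : ℝ => 3 * a3m * t ^ 2 + 2 * a2m * t + a1m)
        (6 * a3m * t + 2 * a2m) t := by
      have := ((hasDerivAt_pow 2 t).const_mul (3 * a3m)).add
        (((hasDerivAt_id t).const_mul (2 * a2m)).add (hasDerivAt_const t a1m))
      convert this using 1
      · rfl
      · rfl
      · ext s; simp only [id_eq, Pi.add_apply]; ring
      · push_cast; ring
    exact h.deriv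
  have hdfm' : ∀ t : ℝ, deriv fm t = 3 * a3m * t ^ 2 + 2 * a2m * t + a1m := by
    intro t; rw [hdfm]
  rw [hdfp, hddfm, hdfm', hu₀m]
  have h3 : (3 * (a3p - a3m)) ≠ 0 := by positivity
  set c := (a2p - a2m) / (3 * (a3p - a3m)) with hcdef
  have hc : 3 * (a3p - a3m) * c = a2p - a2m := by
    rw [hcdef]; field_simp
  have hE2' : 12 * (-a3m) * ε₀m ^ 2 = a1p - a1m - (a2p - a2m) * c := by
    rw [hE2, hcdef]; field_simp [ha3m.ne, hdm.ne']
  linear_combination c * hc - hE2'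
end

section
/- Let a₃⁺ > 0 > a₃⁻ with a₃⁺ > −a₃⁻, let ε₀⁺ > 0, and set ε₀⁻ = √(a₃⁺/(−a₃⁻))·ε₀⁺, u₀⁺ = ε₀⁺ − m, u₀⁻ = −ε₀⁻ − m (for an arbitrary real m), and u₊ˡ(ε) = u₀⁺ + (ε − ε₀⁺) − 2√( a₃⁺(ε² − (ε₀⁺)²)/(a₃⁺ − a₃⁻) ). Then u₊ˡ(ε₀⁻) − u₀⁻ = 2ε₀⁺·√(a₃⁺/(−a₃⁻))·(1 − √( (a₃⁺ + a₃⁻)/(a₃⁺ − a₃⁻) )), and this quantity is strictly positive. -/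
/-- the left endpoint `u₊ˡ(ε₀⁻)` of the upper pocket at the
moment `ε = ε₀⁻` lies strictly to the right of the birth point `u₀⁻` of the
lower pocket:
`u₊ˡ(ε₀⁻) − u₀⁻ = 2ε₀⁺√(a₃⁺/(−a₃⁻))(1 − √((a₃⁺+a₃⁻)/(a₃⁺−a₃⁻))) > 0`. -/
theorem stmt_14 (a3p a3m ε₀p m : ℝ)
    (ha3p : 0 < a3p) (ha3m : a3m < 0) (hgt : -a3m < a3p) (hε₀p : 0 < ε₀p)
    (ε₀m u₀p u₀m : ℝ) (upl : ℝ → ℝ)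
    (hε₀m : ε₀m = Real.sqrt (a3p / (-a3m)) * ε₀p)
    (hu₀p : u₀p = ε₀p - m) (hu₀m : u₀m = -ε₀m - m)
    (hupl : ∀ ε : ℝ, upl ε = u₀p + (ε - ε₀p) -
      2 * Real.sqrt (a3p * (ε ^ 2 - ε₀p ^ 2) / (a3p - a3m))) :
    upl ε₀m - u₀m = 2 * ε₀p * Real.sqrt (a3p / (-a3m)) *
      (1 - Real.sqrt ((a3p + a3m) / (a3p - a3m))) ∧
    0 < upl ε₀m - u₀m := by
  have hm : (0:ℝ) < -a3m := by linarith
  have hmne : a3m ≠ 0 := ne_of_lt ha3m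
  have hdiff : (0:ℝ) < a3p - a3m := by linarith
  have hspos : 0 < a3p / (-a3m) := div_pos ha3p hm
  set s := Real.sqrt (a3p / (-a3m)) with hs
  have hs2 : s ^ 2 = a3p / (-a3m) := Real.sq_sqrt hspos.le
  have hs0 : 0 < s := Real.sqrt_pos.mpr hspos
  set A := (a3p + a3m) / (a3p - a3m) with hA
  have hA0 : 0 ≤ A := div_nonneg (by linarith) hdiff.le
  have hA1 : A < 1 := (div_lt_one hdiff).mpr (by linarith)
  have harg : a3p * (ε₀m ^ 2 - ε₀p ^ 2) / (a3p - a3m) = (ε₀p * s) ^ 2 * A := by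
    rw [hε₀m, hA]
    have : (s * ε₀p) ^ 2 = a3p / (-a3m) * ε₀p ^ 2 := by rw [mul_pow, hs2]
    rw [this, mul_pow, hs2]
    field_simp
    ring
  have hsqrt : Real.sqrt (a3p * (ε₀m ^ 2 - ε₀p ^ 2) / (a3p - a3m))
      = ε₀p * s * Real.sqrt A := by
    rw [harg, Real.sqrt_mul (sq_nonneg _), Real.sqrt_sq (by positivity)]
  have heq : upl ε₀m - u₀m = 2 * ε₀p * s * (1 - Real.sqrt A) := by
    rw [hupl, hsqrt, hu₀p, hu₀m, hε₀m]
    ring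
  refine ⟨heq, heq ▸ ?_⟩
  have hsA : Real.sqrt A < 1 := by
    have := Real.sqrt_lt_sqrt hA0 hA1
    simpa using this
  have : 0 < 1 - Real.sqrt A := by linarith
  positivity
end

section
/- Let ε > 0 and C₁, C₂ be real numbers with C₂ ≠ 0 and C₂² < ε², and let F₊, F₋, P₊, P₋ be real numbers. Define Aˡ = ((ε² − C₂²)/(2εC₂))·[(ε + C₂)P₊ − (ε − C₂)P₋] + ((ε + C₂)F₊ + (ε − C₂)F₋)/(2ε), Aʳ = −((ε² − C₂²)/(2εC₂))·[(ε + C₂)P₋ − (ε − C₂)P₊] + ((ε − C₂)F₊ + (ε + C₂)F₋)/(2ε), a = (P₊ − P₋)/(4C₂), b = ((C₁ + C₂)P₋ − (C₁ − C₂)P₊)/(2C₂), c = (F₊ − F₋ − C₂(P₊ + P₋))/(2ε), d = (F₊ + F₋)/2 + ((C₁² + ε² − C₂² − 2C₁C₂)P₊ − (C₁² + ε² − C₂² + 2C₁C₂)P₋)/(4C₂), and let B(x₁,x₂) = a(x₁² − x₂²) + bx₁ + cx₂ + d. Then B(C₁ + C₂, ε) = F₊, B(C₁ + ε, C₂) =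 Aˡ, B(C₁ − C₂, −ε) = F₋, and B(C₁ − ε, −C₂) = Aʳ. -/
/-- the bilinear function `B(x₁,x₂) = a(x₁²−x₂²)+bx₁+cx₂+d`
with the coefficients of the rectangle construction takes the prescribed
values `F₊`, `Aˡ`, `F₋`, `Aʳ` at the four vertices of the rectangle. -/
theorem stmt_15 (ε C₁ C₂ Fp Fm Pp Pm : ℝ)
    (hε : 0 < ε) (hC₂ : C₂ ≠ 0) (hC₂ε : C₂ ^ 2 < ε ^ 2)
    (Al Ar a b c d : ℝ) (B : ℝ → ℝ → ℝ)
    (hAl : Al = (ε ^ 2 - C₂ ^ 2) / (2 * ε * C₂) *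
        ((ε + C₂) * Pp - (ε - C₂) * Pm) +
      ((ε + C₂) * Fp + (ε - C₂) * Fm) / (2 * ε))
    (hAr : Ar = -((ε ^ 2 - C₂ ^ 2) / (2 * ε * C₂)) *
        ((ε + C₂) * Pm - (ε - C₂) * Pp) +
      ((ε - C₂) * Fp + (ε + C₂) * Fm) / (2 * ε))
    (ha : a = (Pp - Pm) / (4 * C₂))
    (hb : b = ((C₁ + C₂) * Pm - (C₁ - C₂) * Pp) / (2 * C₂))
    (hc : c = (Fp - Fm - C₂ * (Pp + Pm)) / (2 * ε))
    (hd : d = (Fp + Fm) / 2 +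
      ((C₁ ^ 2 + ε ^ 2 - C₂ ^ 2 - 2 * C₁ * C₂) * Pp -
        (C₁ ^ 2 + ε ^ 2 - C₂ ^ 2 + 2 * C₁ * C₂) * Pm) / (4 * C₂))
    (hB : ∀ x₁ x₂ : ℝ, B x₁ x₂ = a * (x₁ ^ 2 - x₂ ^ 2) + b * x₁ + c * x₂ + d) :
    B (C₁ + C₂) ε = Fp ∧ B (C₁ + ε) C₂ = Al ∧
    B (C₁ - C₂) (-ε) = Fm ∧ B (C₁ - ε) (-C₂) = Ar := by
  have hεne : ε ≠ 0 := ne_of_gt hε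
  subst hAl hAr ha hb hc hd
  refine ⟨?_, ?_, ?_, ?_⟩ <;> rw [hB] <;> field_simp <;> ring
end
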